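/- If G and H are generalized geodetic graphs, then sg(G □ H) ≥ max{ sg(G), sg(H) }. -/

import Mathlib

/-!
Distances in `G □ H` add up coordinatewise, so projecting a shortest walk of `G □ H` to a factor
gives a shortest walk there, through the projections of the vertices it visits. Hence the
projection of a geodetic set of `G □ H` is a geodetic set of each factor, and
`g(G) ≤ g(G □ H) ≤ sg(G □ H)`; for a generalized geodetic `G` the left-hand side is `sg(G)`.
-/

open SimpleGraph

/-- A choice of one fixed shortest path (geodesic) between each pair of vertices,
symmetric in the sense that the path from `v` to `u` is the reverse of the one
from `u` to `v`. -/
def StrongGeodeticChoice {V : Type*} (G : SimpleGraph V) (p : ∀ u v : V, G.Walk u v) : Prop :=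
  ∀ u v : V, (p u v).IsPath ∧ (p u v).length = G.dist u v ∧ p v u = (p u v).reverse

/-- `S` is a strong geodetic set of `G`: one can fix one shortest path between each
pair of vertices of `S` so that every vertex of `G` lies on some fixed path. -/
def IsStrongGeodeticSet {V : Type*} (G : SimpleGraph V) (S : Set V) : Prop :=
  ∃ p : ∀ u v : V, G.Walk u v, StrongGeodeticChoice G p ∧
    ∀ w : V, ∃ u ∈ S, ∃ v ∈ S, w ∈ (p u v).support

/-- The strong geodetic number of `G`. -/
noncomputable def sg {V : Type*} (G : SimpleGraph V) : ℕ :=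
  sInf {n | ∃ S : Set V, S.ncard = n ∧ IsStrongGeodeticSet G S}

/-- The strong geodetic core number of `G`: the minimum, over minimum strong
geodetic sets `S` together with a choice of fixed geodesics witnessing them,
of the size of a subset `X ⊆ S` such that the fixed paths with an endpoint in `X`
already cover all vertices. -/
noncomputable def sgc {V : Type*} (G : SimpleGraph V) : ℕ :=
  sInf {k | ∃ (S X : Set V) (p : ∀ u v : V, G.Walk u v),
    StrongGeodeticChoice G p ∧ S.ncard = sg G ∧
    (∀ w : V, ∃ u ∈ S, ∃ v ∈ S, w ∈ (p u v).support) ∧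
    X ⊆ S ∧ X.ncard = k ∧
    (∀ w : V, ∃ u ∈ X, ∃ v ∈ S, w ∈ (p u v).support)}

/-- `A` is a geodetic set: every vertex lies on some shortest path between two
vertices of `A`. -/
def IsGeodeticSet {V : Type*} (G : SimpleGraph V) (A : Set V) : Prop :=
  ∀ w : V, ∃ u ∈ A, ∃ v ∈ A, ∃ q : G.Walk u v, q.length = G.dist u v ∧ w ∈ q.support

/-- The geodetic number of `G`. -/
noncomputable def geodeticNumber {V : Type*} (G : SimpleGraph V) : ℕ :=
  sInf {n | ∃ A : Set V, A.ncard = n ∧ IsGeodeticSet G A}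

namespace SimpleGraph

variable {α β : Type*} {G : SimpleGraph α} {H : SimpleGraph β}

namespace Walk

lemma fst_mem_support_ofBoxProdLeft [DecidableEq β] [DecidableRel G.Adj] {x y z : α × β}
    (w : (G □ H).Walk x y) (hz : z ∈ w.support) : z.1 ∈ w.ofBoxProdLeft.support := by
  induction w with
  | nil => simp_all
  | @cons x' y' _ h w ih =>
    obtain ⟨a, b⟩ := x'
    obtain ⟨c, d⟩ := y'
    rw [support_cons, List.mem_cons] at hz
    unfold ofBoxProdLeft Or.by_cases
    split_ifs with hG
    · rcases hz with rfl | hz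
      · exact start_mem_support _
      · exact List.mem_cons_of_mem _ (ih hz)
    · obtain ⟨-, rfl⟩ : H.Adj b d ∧ a = c := h.resolve_left hG
      rcases hz with rfl | hz
      · exact start_mem_support _
      · exact ih hz

lemma snd_mem_support_ofBoxProdRight [DecidableEq α] [DecidableRel H.Adj] {x y z : α × β}
    (w : (G □ H).Walk x y) (hz : z ∈ w.support) : z.2 ∈ w.ofBoxProdRight.support := by
  induction w with
  | nil => simp_all
  | @cons x' y' _ h w ih =>
    obtain ⟨a, b⟩ := x'
    obtain ⟨c, d⟩ := y'
    rw [support_cons, List.mem_cons] at hz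
    unfold ofBoxProdRight Or.by_cases
    split_ifs with hH
    · rcases hz with rfl | hz
      · exact start_mem_support _
      · exact List.mem_cons_of_mem _ (ih hz)
    · obtain ⟨-, rfl⟩ : G.Adj a c ∧ b = d := (Or.symm h).resolve_left hH
      rcases hz with rfl | hz
      · exact start_mem_support _
      · exact ih hz

end Walk

lemma dist_boxProd {x y : α × β} (h : (G □ H).Reachable x y) :
    (G □ H).dist x y = G.dist x.1 y.1 + H.dist x.2 y.2 := by
  obtain ⟨hG, hH⟩ := reachable_boxProd.1 h
  have h_coe : ((G □ H).dist x y : ℕ∞) = (G.dist x.1 y.1 : ℕ∞) + H.dist x.2 y.2 := by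
    rw [h.coe_dist_eq_edist, hG.coe_dist_eq_edist, hH.coe_dist_eq_edist, edist_boxProd]
  exact_mod_cast h_coe

lemma Walk.length_ofBoxProd_eq_dist [DecidableEq α] [DecidableEq β] [DecidableRel G.Adj]
    [DecidableRel H.Adj] {x y : α × β} (w : (G □ H).Walk x y)
    (hw : w.length = (G □ H).dist x y) :
    w.ofBoxProdLeft.length = G.dist x.1 y.1 ∧ w.ofBoxProdRight.length = H.dist x.2 y.2 := by
  obtain ⟨a, b⟩ := x
  obtain ⟨c, d⟩ := y
  have h_split := w.length_boxProd
  have h_dist := dist_boxProd ⟨w⟩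
  have hG := dist_le w.ofBoxProdLeft
  have hH := dist_le w.ofBoxProdRight
  omega

end SimpleGraph

section Geodetic

variable {V α β : Type*} {G : SimpleGraph V}

lemma exists_strongGeodeticChoice (hG : G.Connected) : ∃ p, StrongGeodeticChoice G p := by
  classical
  -- any linear order orients every pair, so that `p v u` can be the reverse of `p u v`
  let : LinearOrder V := IsWellOrder.linearOrder WellOrderingRel
  choose q hq_path hq_len using hG.exists_path_of_dist
  have hq_self (u : V) : q u u = .nil :=
    (Walk.length_eq_zero_iff.1 ((hq_len u u).trans dist_self)).eq_nil
  refine ⟨fun u v => if u ≤ v then q u v else (q v u).reverse, fun u v => ?_⟩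
  dsimp only
  refine ⟨?_, ?_, ?_⟩
  · split_ifs
    exacts [hq_path u v, (hq_path v u).reverse]
  · split_ifs
    exacts [hq_len u v, by rw [Walk.length_reverse, hq_len, dist_comm]]
  · rcases lt_trichotomy u v with huv | rfl | huv
    · simp [huv.le, huv.not_ge]
    · simp [hq_self]
    · simp [huv.le, huv.not_ge]

lemma IsStrongGeodeticSet.isGeodeticSet {S : Set V} (hS : IsStrongGeodeticSet G S) :
    IsGeodeticSet G S := by
  obtain ⟨p, hp, hcover⟩ := hS
  intro w
  obtain ⟨u, hu, v, hv, hw⟩ := hcover w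
  exact ⟨u, hu, v, hv, p u v, (hp u v).2.1, hw⟩

lemma isStrongGeodeticSet_univ (hG : G.Connected) : IsStrongGeodeticSet G Set.univ := by
  obtain ⟨p, hp⟩ := exists_strongGeodeticChoice hG
  exact ⟨p, hp, fun w => ⟨w, trivial, w, trivial, Walk.start_mem_support _⟩⟩

lemma isGeodeticSet_univ (G : SimpleGraph V) : IsGeodeticSet G Set.univ :=
  fun w => ⟨w, trivial, w, trivial, .nil, dist_self.symm, Walk.start_mem_support _⟩

lemma geodeticNumber_le_ncard {A : Set V} (hA : IsGeodeticSet G A) :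
    geodeticNumber G ≤ A.ncard :=
  Nat.sInf_le ⟨A, rfl, hA⟩

lemma exists_isGeodeticSet_ncard_eq_geodeticNumber (G : SimpleGraph V) :
    ∃ A : Set V, A.ncard = geodeticNumber G ∧ IsGeodeticSet G A :=
  Nat.sInf_mem (s := {n | ∃ A : Set V, A.ncard = n ∧ IsGeodeticSet G A})
    ⟨_, Set.univ, rfl, isGeodeticSet_univ G⟩

lemma exists_isStrongGeodeticSet_ncard_eq_sg (hG : G.Connected) :
    ∃ S : Set V, S.ncard = sg G ∧ IsStrongGeodeticSet G S :=
  Nat.sInf_mem (s := {n | ∃ S : Set V, S.ncard = n ∧ IsStrongGeodeticSet G S})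
    ⟨_, Set.univ, rfl, isStrongGeodeticSet_univ hG⟩

lemma geodeticNumber_le_sg (hG : G.Connected) : geodeticNumber G ≤ sg G := by
  obtain ⟨S, hS_card, hS⟩ := exists_isStrongGeodeticSet_ncard_eq_sg hG
  exact hS_card ▸ geodeticNumber_le_ncard hS.isGeodeticSet

variable {G : SimpleGraph α} {H : SimpleGraph β}

lemma IsGeodeticSet.image_fst [Nonempty β] {A : Set (α × β)} (hA : IsGeodeticSet (G □ H) A) :
    IsGeodeticSet G (Prod.fst '' A) := by
  classical
  intro a
  obtain ⟨u, hu, v, hv, q, hq, ha⟩ := hA (a, Classical.arbitrary β)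
  exact ⟨u.1, Set.mem_image_of_mem _ hu, v.1, Set.mem_image_of_mem _ hv, q.ofBoxProdLeft,
    (q.length_ofBoxProd_eq_dist hq).1, q.fst_mem_support_ofBoxProdLeft ha⟩

lemma IsGeodeticSet.image_snd [Nonempty α] {A : Set (α × β)} (hA : IsGeodeticSet (G □ H) A) :
    IsGeodeticSet H (Prod.snd '' A) := by
  classical
  intro b
  obtain ⟨u, hu, v, hv, q, hq, hb⟩ := hA (Classical.arbitrary α, b)
  exact ⟨u.2, Set.mem_image_of_mem _ hu, v.2, Set.mem_image_of_mem _ hv, q.ofBoxProdRight,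
    (q.length_ofBoxProd_eq_dist hq).2, q.snd_mem_support_ofBoxProdRight hb⟩

variable [Finite α] [Finite β]

lemma geodeticNumber_le_geodeticNumber_boxProd_left [Nonempty β] :
    geodeticNumber G ≤ geodeticNumber (G □ H) := by
  obtain ⟨A, hA_card, hA⟩ := exists_isGeodeticSet_ncard_eq_geodeticNumber (G □ H)
  calc geodeticNumber G ≤ (Prod.fst '' A).ncard := geodeticNumber_le_ncard hA.image_fst
    _ ≤ A.ncard := Set.ncard_image_le A.toFinite
    _ = geodeticNumber (G □ H) := hA_card

lemma geodeticNumber_le_geodeticNumber_boxProd_right [Nonempty α] :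
    geodeticNumber H ≤ geodeticNumber (G □ H) := by
  obtain ⟨A, hA_card, hA⟩ := exists_isGeodeticSet_ncard_eq_geodeticNumber (G □ H)
  calc geodeticNumber H ≤ (Prod.snd '' A).ncard := geodeticNumber_le_ncard hA.image_snd
    _ ≤ A.ncard := Set.ncard_image_le A.toFinite
    _ = geodeticNumber (G □ H) := hA_card

end Geodetic

theorem stmt14 {V W : Type*} [Fintype V] [Fintype W]
    (G : SimpleGraph V) (H : SimpleGraph W) (hG : G.Connected) (hH : H.Connected)
    (hgenG : geodeticNumber G = sg G) (hgenH : geodeticNumber H = sg H) :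
    sg (G □ H) ≥ max (sg G) (sg H) := by
  have := hG.nonempty
  have := hH.nonempty
  have h_le : geodeticNumber (G □ H) ≤ sg (G □ H) := geodeticNumber_le_sg (hG.boxProd hH)
  refine max_le ?_ ?_
  · calc sg G = geodeticNumber G := hgenG.symm
      _ ≤ geodeticNumber (G □ H) := geodeticNumber_le_geodeticNumber_boxProd_left
      _ ≤ sg (G □ H) := h_le
  · calc sg H = geodeticNumber H := hgenH.symm
      _ ≤ geodeticNumber (G □ H) := geodeticNumber_le_geodeticNumber_boxProd_right
      _ ≤ sg (G □ H) := h_le
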